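/- Fix m ∈ ℂ and define, for (a, ν) ∈ ℂ² with sin(2πa) ≠ 0: p_A(a,ν) := 2cos(2πa), p_B(a,ν) := (sin(π(2a−m))e^{−iν/2} + sin(π(2a+m))e^{iν/2})/sin(2πa), and p_{AB}(a,ν) := (sin(π(2a−m))e^{i(2πa−ν/2)} + sin(π(2a+m))e^{−i(2πa−ν/2)})/sin(2πa). Then at every point with sin(2πa) ≠ 0, the Goldman bracket identity holds: (1/2π)·(∂p_A/∂a · ∂p_B/∂ν − ∂p_A/∂ν · ∂p_B/∂a) = p_{AB} − (1/2)·p_A·p_B, where ∂/∂a and ∂/∂ν denote the complex partial derivatives in a and ν. In particular, (a, ν) are Darboux coordinates for the Goldman bracket {p_A, p_B} = p_{AB} − (1/2)p_A p_B. -/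

import Mathlib

set_option maxHeartbeats 1000000


/-- The trace coordinate `p_A = tr M_A = 2cos(2πa)`. -/
noncomputable def pA (m a ν : ℂ) : ℂ := 2 * Complex.cos (2 * (Real.pi : ℂ) * a)

/-- The trace coordinate `p_B = tr M_B`. -/
noncomputable def pB (m a ν : ℂ) : ℂ :=
  (Complex.sin ((Real.pi : ℂ) * (2 * a - m)) * Complex.exp (-Complex.I * ν / 2) +
    Complex.sin ((Real.pi : ℂ) * (2 * a + m)) * Complex.exp (Complex.I * ν / 2)) /
    Complex.sin (2 * (Real.pi : ℂ) * a)

/-- The trace coordinate `p_{AB} = tr (M_A M_B)`. -/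
noncomputable def pAB (m a ν : ℂ) : ℂ :=
  (Complex.sin ((Real.pi : ℂ) * (2 * a - m)) *
      Complex.exp (Complex.I * (2 * (Real.pi : ℂ) * a - ν / 2)) +
    Complex.sin ((Real.pi : ℂ) * (2 * a + m)) *
      Complex.exp (-(Complex.I * (2 * (Real.pi : ℂ) * a - ν / 2)))) /
    Complex.sin (2 * (Real.pi : ℂ) * a)

/-- `(a, ν)` are Darboux coordinates for the Goldman bracket:
`(1/2π)·(∂_a p_A · ∂_ν p_B − ∂_ν p_A · ∂_a p_B) = p_{AB} − (1/2)p_A p_B`. -/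
theorem goldman_darboux (m : ℂ) (a ν : ℂ)
    (ha : Complex.sin (2 * (Real.pi : ℂ) * a) ≠ 0) :
    (1 / (2 * (Real.pi : ℂ))) *
      (deriv (fun a' => pA m a' ν) a * deriv (fun ν' => pB m a ν') ν -
        deriv (fun ν' => pA m a ν') ν * deriv (fun a' => pB m a' ν) a) =
      pAB m a ν - (1 / 2) * pA m a ν * pB m a ν := by
  have hπ : (Real.pi : ℂ) ≠ 0 := by exact_mod_cast Real.pi_ne_zero
  set π : ℂ := (Real.pi : ℂ)
  set S1 : ℂ := Complex.sin (π * (2 * a - m))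
  set S2 : ℂ := Complex.sin (π * (2 * a + m))
  -- derivative of pA in a
  have hA : deriv (fun a' => pA m a' ν) a
      = 2 * (-Complex.sin (2 * π * a) * (2 * π)) := by
    have h : HasDerivAt (fun a' => pA m a' ν)
        (2 * (-Complex.sin (2 * π * a) * (2 * π))) a := by
      simpa [pA] using (((hasDerivAt_id a).const_mul (2 * π)).ccos.const_mul (2 : ℂ))
    exact h.deriv
  -- derivative of pA in ν is 0
  have hA0 : deriv (fun ν' => pA m a ν') ν = 0 := by
    simp [pA]
  -- derivative of pB in ν
  have hB : deriv (fun ν' => pB m a ν') ν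
      = (S1 * (Complex.exp (-Complex.I * ν / 2) * (-Complex.I / 2))
        + S2 * (Complex.exp (Complex.I * ν / 2) * (Complex.I / 2)))
        / Complex.sin (2 * π * a) := by
    have h1 : HasDerivAt (fun ν' : ℂ => Complex.exp (-Complex.I * ν' / 2))
        (Complex.exp (-Complex.I * ν / 2) * (-Complex.I / 2)) ν := by
      have := (((hasDerivAt_id ν).const_mul (-Complex.I)).div_const 2).cexp
      simpa using this
    have h2 : HasDerivAt (fun ν' : ℂ => Complex.exp (Complex.I * ν' / 2))
        (Complex.exp (Complex.I * ν / 2) * (Complex.I / 2)) ν := by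
      have := (((hasDerivAt_id ν).const_mul Complex.I).div_const 2).cexp
      simpa using this
    have h : HasDerivAt (fun ν' => pB m a ν')
        ((S1 * (Complex.exp (-Complex.I * ν / 2) * (-Complex.I / 2))
          + S2 * (Complex.exp (Complex.I * ν / 2) * (Complex.I / 2)))
          / Complex.sin (2 * π * a)) ν := by
      simpa [pB] using ((((h1.const_mul S1).add (h2.const_mul S2)).div_const
        (Complex.sin (2 * π * a))))
    exact h.deriv
  rw [hA, hA0, hB]
  -- expand the exponentials in pAB
  have hE1 : Complex.exp (Complex.I * (2 * π * a - ν / 2))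
      = (Complex.cos (2 * π * a) + Complex.sin (2 * π * a) * Complex.I)
        * Complex.exp (-Complex.I * ν / 2) := by
    rw [← Complex.exp_mul_I, ← Complex.exp_add]
    congr 1; ring
  have hE2 : Complex.exp (-(Complex.I * (2 * π * a - ν / 2)))
      = (Complex.cos (2 * π * a) - Complex.sin (2 * π * a) * Complex.I)
        * Complex.exp (Complex.I * ν / 2) := by
    have h : Complex.exp ((-(2 * π * a)) * Complex.I)
        = Complex.cos (2 * π * a) - Complex.sin (2 * π * a) * Complex.I := by
      rw [Complex.exp_mul_I, Complex.cos_neg, Complex.sin_neg]; ring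
    rw [← h, ← Complex.exp_add]
    congr 1; ring
  simp only [pA, pB, pAB]
  rw [show ((Real.pi : ℂ)) = π from rfl]
  rw [show Complex.sin (π * (2 * a - m)) = S1 from rfl, show Complex.sin (π * (2 * a + m)) = S2 from rfl, hE1, hE2]
  set e1 : ℂ := Complex.exp (-Complex.I * ν / 2)
  set e2 : ℂ := Complex.exp (Complex.I * ν / 2)
  set s : ℂ := Complex.sin (2 * π * a)
  set c : ℂ := Complex.cos (2 * π * a)
  field_simp
  ring
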